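/- arXiv:1001.4855 — 5 statements merged into one kernel-verified Lean document; each statement's English description precedes it below -/
import Mathlib

section
/- Let α be a primitive third root of unity and let G ⊆ GL₅(ℂ) be the group generated by all 5×5 permutation matrices and the diagonal matrix diag(α, α, α, α, α²). If H is a 5×5 complex Hermitian matrix satisfying ᵗM·H·conj(M) = H for every M ∈ G, then H is a scalar multiple of the identity matrix. -/
open Matrix ComplexConjugate

/-! Conjugating by a permutation matrix permutes the rows and columns of `H` simultaneously, so
`H` has a constant diagonal and, the action of `S₅` on ordered pairs of distinct indices being
transitive, a constant off-diagonal. Conjugating by `diag(α,α,α,α,α²)` multiplies the entry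
`H 0 4` by `α · conj α ^ 2`; taking absolute values, this factor can only be `1` when `|α| = 1`,
and then it equals `conj α`, so it is `≠ 1`. Hence the off-diagonal vanishes. -/

theorem Complex.eq_one_of_mul_conj_sq_eq_one {z : ℂ} (h : z * conj z ^ 2 = 1) : z = 1 := by
  have hnorm : ‖z‖ = 1 := by
    have h3 : ‖z‖ ^ 3 = 1 := by
      simpa [norm_mul, norm_pow, Complex.norm_conj, ← pow_succ'] using congrArg norm h
    exact (pow_eq_one_iff_of_nonneg (norm_nonneg z) (by norm_num)).mp h3
  have hzz : z * conj z = 1 := by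
    rw [Complex.mul_conj, Complex.normSq_eq_norm_sq, hnorm]; simp
  have hconj : conj z = 1 := by linear_combination h - conj z * hzz
  simpa using congrArg conj hconj

namespace Matrix

variable {n R : Type*} [DecidableEq n] [Semiring R]

theorem transpose_mul_mul_map_perm [Fintype n] (σ : Equiv.Perm n) (f : R →+* R)
    (H : Matrix n n R) (i j : n) :
    ((of fun i j => if σ j = i then 1 else 0 : Matrix n n R)ᵀ * H *
        (of fun i j => if σ j = i then 1 else 0 : Matrix n n R).map f) i j = H (σ i) (σ j) := by
  simp [mul_apply, transpose_apply, ite_mul, mul_ite, Finset.sum_ite_eq]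

theorem transpose_mul_mul_map_diagonal [Fintype n] (d : n → R) (f : R →+* R)
    (H : Matrix n n R) (i j : n) :
    ((diagonal d)ᵀ * H * (diagonal d).map f) i j = d i * H i j * f (d j) := by
  rw [diagonal_transpose, diagonal_map (map_zero f), mul_diagonal, diagonal_mul]

theorem eq_smul_one_of_perm_invariant {H : Matrix n n R}
    (hperm : ∀ σ : Equiv.Perm n, ∀ i j, H (σ i) (σ j) = H i j) {a b : n} (hab : a ≠ b)
    (hoff : H a b = 0) : H = H a a • 1 := by
  ext i j
  rcases eq_or_ne i j with rfl | hij
  · simpa using hperm (Equiv.swap a i) a a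
  · obtain ⟨σ, hσa, hσb⟩ := MulAction.is_two_pretransitive_iff.mp
      (Equiv.Perm.isMultiplyPretransitive n 2) hab hij
    rw [Equiv.Perm.smul_def] at hσa hσb
    simp [← hσa, ← hσb, hperm, hoff, hab]

end Matrix

theorem stmt_2_general (α : ℂ) (hα1 : α ≠ 1)
    (H : Matrix (Fin 5) (Fin 5) ℂ)
    (hinv : ∀ M ∈ Submonoid.closure
      (insert (Matrix.diagonal ![α, α, α, α, α ^ 2])
        {P : Matrix (Fin 5) (Fin 5) ℂ |
          ∃ σ : Equiv.Perm (Fin 5), P = fun i j => if σ j = i then 1 else 0}),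
      Mᵀ * H * M.map (starRingEnd ℂ) = H) :
    ∃ c : ℂ, H = c • (1 : Matrix (Fin 5) (Fin 5) ℂ) := by
  have hperm : ∀ σ : Equiv.Perm (Fin 5), ∀ i j, H (σ i) (σ j) = H i j := fun σ i j =>
    (transpose_mul_mul_map_perm σ (starRingEnd ℂ) H i j).symm.trans <| congrFun₂
      (hinv _ (Submonoid.subset_closure (Set.mem_insert_of_mem _ ⟨σ, rfl⟩))) i j
  have hoff : H 0 4 = 0 := by
    have h := transpose_mul_mul_map_diagonal ![α, α, α, α, α ^ 2] (starRingEnd ℂ) H 0 4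
    rw [hinv _ (Submonoid.subset_closure (Set.mem_insert _ _))] at h
    have hscale : H 0 4 * (α * conj α ^ 2 - 1) = 0 := by
      simp only [Matrix.cons_val, map_pow] at h
      linear_combination -h
    refine (mul_eq_zero.mp hscale).resolve_right fun h1 => hα1 ?_
    exact Complex.eq_one_of_mul_conj_sq_eq_one (sub_eq_zero.mp h1)
  exact ⟨H 0 0, eq_smul_one_of_perm_invariant hperm (by decide) hoff⟩

/-- If a Hermitian 5×5 matrix `H` satisfies `ᵗM·H·conj(M) = H` for every `M` in the
group generated by the permutation matrices and `diag(α,α,α,α,α²)` (the complex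
reflection group `G(3,3,5)`, with `α` a primitive third root of unity), then `H` is a
scalar multiple of the identity. (All generators have finite order, so the generated
monoid coincides with the generated group.) -/
theorem stmt_2 (α : ℂ) (hα3 : α ^ 3 = 1) (hα1 : α ≠ 1)
    (H : Matrix (Fin 5) (Fin 5) ℂ) (hH : H.IsHermitian)
    (hinv : ∀ M ∈ Submonoid.closure
      (insert (Matrix.diagonal ![α, α, α, α, α ^ 2])
        {P : Matrix (Fin 5) (Fin 5) ℂ |
          ∃ σ : Equiv.Perm (Fin 5), P = fun i j => if σ j = i then 1 else 0}),
      Mᵀ * H * M.map (starRingEnd ℂ) = H) :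
    ∃ c : ℂ, H = c • (1 : Matrix (Fin 5) (Fin 5) ℂ) :=
  stmt_2_general α hα1 H hinv
end

section
/- Let α be a primitive third root of unity, e₁,…,e₅ the standard basis of ℂ⁵, and Λ₀ the ℤ[α]-submodule of ℂ⁵ generated by the vectors eᵢ − β eⱼ for 1 ≤ i < j ≤ 5 and β ∈ {1, α, α²}. Let Λ = {x = (x₁,…,x₅) ∈ ℂ⁵ : xᵢ − β xⱼ ∈ ℤ[α] for all 1 ≤ i < j ≤ 5 and all β ∈ {1,α,α²}}. Then Λ = ℤ[α]e₁ ⊕ ℤ[α]e₂ ⊕ ℤ[α]e₃ ⊕ ℤ[α]e₄ ⊕ (1/(α−1))·ℤ[α]·w, where w = e₁ + e₂ + e₃ + e₄ + e₅, and the quotient group Λ/Λ₀ is isomorphic to (ℤ/3ℤ)². -/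
/-!
A point `x ∈ Λ ⊆ ℂⁿ⁺¹` is determined by the differences `xᵢ - xₙ₊₁ ∈ ℤ[α]` and by
`(α - 1)xₙ₊₁ = (x₁ - xₙ₊₁) - (x₁ - αxₙ₊₁) ∈ ℤ[α]`, which gives the basis description of `Λ`.
The functional `x ↦ (α - 1)∑ xᵢ` maps `Λ` into `ℤ[α]` and, because `(α - 1)² = -3α`, maps `Λ₀`
into `3ℤ[α]`. Conversely, if `3 ∤ n + 1` and `(α - 1)∑ xᵢ ∈ 3ℤ[α]`, then all `xᵢ` lie in `ℤ[α]`
and `∑ xᵢ ∈ (α - 1)ℤ[α]`, which forces `x ∈ Λ₀`. So `Λ/Λ₀` embeds in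
`ℤ[α]/3ℤ[α] ≅ (ℤ/3ℤ)²`, and the embedding is onto because `e₁` and `w/(α - 1)` map to `α - 1`
and `n + 1`.
-/

open Finset

noncomputable section

namespace EisensteinLattice

section Eisenstein

variable (α : ℂ)

def eisenstein : AddSubgroup ℂ where
  carrier := {z | ∃ m n : ℤ, z = m + n * α}
  zero_mem' := ⟨0, 0, by simp⟩
  add_mem' := by
    rintro _ _ ⟨m, n, rfl⟩ ⟨m', n', rfl⟩
    exact ⟨m + m', n + n', by push_cast; ring⟩
  neg_mem' := by
    rintro _ ⟨m, n, rfl⟩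
    exact ⟨-m, -n, by push_cast; ring⟩

def coeffs : ℤ × ℤ →+ ℂ := (zmultiplesHom ℂ 1).coprod (zmultiplesHom ℂ α)

@[simp]
lemma coeffs_apply (p : ℤ × ℤ) : coeffs α p = p.1 + p.2 * α := by
  simp [coeffs, zsmul_eq_mul]

lemma eisenstein_eq_range : eisenstein α = (coeffs α).range := by
  ext z
  constructor
  · rintro ⟨m, n, rfl⟩
    exact ⟨(m, n), by simp⟩
  · rintro ⟨p, rfl⟩
    exact ⟨p.1, p.2, by simp⟩

def multiplesOf (c : ℂ) : AddSubgroup ℂ := (eisenstein α).map (AddMonoidHom.mulLeft c)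

variable {α}

lemma mem_multiplesOf {c z : ℂ} :
    z ∈ multiplesOf α c ↔ ∃ t ∈ eisenstein α, c * t = z := by
  simp [multiplesOf]

lemma intCast_mem_eisenstein (m : ℤ) : (m : ℂ) ∈ eisenstein α := ⟨m, 0, by simp⟩

lemma one_mem_eisenstein : (1 : ℂ) ∈ eisenstein α := ⟨1, 0, by simp⟩

lemma self_mem_eisenstein : α ∈ eisenstein α := ⟨0, 1, by simp⟩

lemma mem_eisenstein_of_mem_pair {z : ℂ} (hz : z ∈ ({1, α} : Set ℂ)) :
    z ∈ eisenstein α := by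
  rcases hz with rfl | rfl
  exacts [one_mem_eisenstein, self_mem_eisenstein]

lemma mul_mem_eisenstein (hα : α ^ 2 + α + 1 = 0) {z w : ℂ} (hz : z ∈ eisenstein α)
    (hw : w ∈ eisenstein α) : z * w ∈ eisenstein α := by
  obtain ⟨m, n, rfl⟩ := hz
  obtain ⟨m', n', rfl⟩ := hw
  exact ⟨m * m' - n * n', m * n' + n * m' - n * n', by
    push_cast; linear_combination ((n : ℂ) * n') * hα⟩

lemma mem_eisenstein_of_mem_cubeRoots (hα : α ^ 2 + α + 1 = 0) {β : ℂ}
    (hβ : β ∈ ({1, α, α ^ 2} : Set ℂ)) : β ∈ eisenstein α := by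
  rcases hβ with rfl | rfl | rfl
  · exact one_mem_eisenstein
  · exact self_mem_eisenstein
  · exact ⟨-1, -1, by push_cast; linear_combination hα⟩

lemma sub_one_ne_zero (hα : α ^ 2 + α + 1 = 0) : α - 1 ≠ 0 := by
  intro h
  rw [sub_eq_zero.mp h] at hα
  norm_num at hα

lemma im_ne_zero (hα : α ^ 2 + α + 1 = 0) : α.im ≠ 0 := by
  intro h
  have hre : α = α.re := Complex.ext rfl (by simp [h])
  rw [hre] at hα
  have : α.re ^ 2 + α.re + 1 = 0 := by exact_mod_cast hα
  nlinarith [sq_nonneg (α.re + 1 / 2)]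

lemma coeffs_injective (h : α.im ≠ 0) : Function.Injective (coeffs α) := by
  refine (injective_iff_map_eq_zero _).mpr fun p hp => ?_
  have him : (p.2 : ℝ) * α.im = 0 := by simpa using congrArg Complex.im hp
  have h2 : p.2 = 0 := by exact_mod_cast (mul_eq_zero.mp him).resolve_right h
  have h1 : p.1 = 0 := by simpa [h2] using hp
  exact Prod.ext h1 h2

def eisensteinEquiv (h : α.im ≠ 0) : eisenstein α ≃+ ℤ × ℤ :=
  (AddEquiv.addSubgroupCongr (eisenstein_eq_range α)).trans
    (AddMonoidHom.ofInjective (coeffs_injective h)).symm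

lemma eisensteinEquiv_apply (h : α.im ≠ 0) {z : eisenstein α} {m n : ℤ}
    (hz : (z : ℂ) = m + n * α) : eisensteinEquiv h z = (m, n) := by
  rw [eisensteinEquiv, AddEquiv.trans_apply, AddEquiv.symm_apply_eq]
  ext
  simp [AddMonoidHom.ofInjective_apply, hz]

def reduceMod (k : ℕ) (h : α.im ≠ 0) : eisenstein α →+ ZMod k × ZMod k :=
  ((Int.castAddHom (ZMod k)).prodMap (Int.castAddHom (ZMod k))).comp
    (eisensteinEquiv h).toAddMonoidHom

lemma reduceMod_apply {k : ℕ} (h : α.im ≠ 0) {z : eisenstein α} {m n : ℤ}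
    (hz : (z : ℂ) = m + n * α) : reduceMod k h z = ((m : ZMod k), (n : ZMod k)) := by
  simp [reduceMod, eisensteinEquiv_apply h hz]

lemma reduceMod_eq_zero_iff {k : ℕ} (h : α.im ≠ 0) {z : eisenstein α} :
    reduceMod k h z = 0 ↔ (z : ℂ) ∈ multiplesOf α k := by
  obtain ⟨m, n, hz⟩ := z.2
  rw [reduceMod_apply h hz, Prod.mk_eq_zero, ZMod.intCast_zmod_eq_zero_iff_dvd,
    ZMod.intCast_zmod_eq_zero_iff_dvd, mem_multiplesOf, hz]
  constructor
  · rintro ⟨⟨a, rfl⟩, ⟨b, rfl⟩⟩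
    exact ⟨a + b * α, ⟨a, b, rfl⟩, by push_cast; ring⟩
  · rintro ⟨_, ⟨a, b, rfl⟩, hab⟩
    have hcoeffs : coeffs α (k * a, k * b) = coeffs α (m, n) := by
      simp only [coeffs_apply]
      push_cast
      linear_combination hab
    obtain ⟨hm, hn⟩ := Prod.mk.inj (coeffs_injective h hcoeffs)
    exact ⟨⟨a, hm.symm⟩, ⟨b, hn.symm⟩⟩

section Multiples

variable {α : ℂ} (hα : α ^ 2 + α + 1 = 0)
include hα

lemma mul_mem_multiplesOf {c z w : ℂ} (hz : z ∈ multiplesOf α c) (hw : w ∈ eisenstein α) :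
    z * w ∈ multiplesOf α c := by
  obtain ⟨t, ht, rfl⟩ := mem_multiplesOf.mp hz
  exact mem_multiplesOf.mpr ⟨t * w, mul_mem_eisenstein hα ht hw, by ring⟩

lemma multiplesOf_le {c : ℂ} (hc : c ∈ eisenstein α) : multiplesOf α c ≤ eisenstein α := by
  rintro _ ⟨t, ht, rfl⟩
  exact mul_mem_eisenstein hα hc ht

lemma one_sub_mem_multiplesOf {β : ℂ} (hβ : β ∈ ({1, α, α ^ 2} : Set ℂ)) :
    1 - β ∈ multiplesOf α (α - 1) := by
  refine mem_multiplesOf.mpr ?_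
  rcases hβ with rfl | rfl | rfl
  · exact ⟨0, zero_mem _, by ring⟩
  · exact ⟨-1, ⟨-1, 0, by simp⟩, by ring⟩
  · exact ⟨-α - 1, ⟨-1, -1, by push_cast; ring⟩, by ring⟩

/-- `(α - 1)² = -3α`. -/
lemma sub_one_mul_mem_multiplesOf_three {z : ℂ} (hz : z ∈ multiplesOf α (α - 1)) :
    (α - 1) * z ∈ multiplesOf α 3 := by
  obtain ⟨t, ht, rfl⟩ := mem_multiplesOf.mp hz
  exact mem_multiplesOf.mpr ⟨-α * t, mul_mem_eisenstein hα ⟨0, -1, by simp⟩ ht,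
    by linear_combination (-t) * hα⟩

/-- `3 = (α - 1)² (α + 1)`. -/
lemma mem_multiplesOf_sub_one_of_sub_one_mul {z : ℂ} (hz : (α - 1) * z ∈ multiplesOf α 3) :
    z ∈ multiplesOf α (α - 1) := by
  obtain ⟨t, ht, hzt⟩ := mem_multiplesOf.mp hz
  refine mem_multiplesOf.mpr
    ⟨(α + 1) * t, mul_mem_eisenstein hα ⟨1, 1, by push_cast; ring⟩ ht, ?_⟩
  refine mul_left_cancel₀ (sub_one_ne_zero hα) ?_
  linear_combination hzt + (α - 2) * t * hα

/-- Since `3 = (α - 1)(-α - 2)`, `3z ∈ ℤ[α]`; combine with `kz` by Bézout. -/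
lemma mem_eisenstein_of_mul_mem {k : ℤ} (hk : IsCoprime k 3) {z : ℂ}
    (hkz : k * z ∈ eisenstein α) (hz : (α - 1) * z ∈ eisenstein α) : z ∈ eisenstein α := by
  obtain ⟨a, b, hab⟩ := hk
  have hab' : (a : ℂ) * k + b * 3 = 1 := by exact_mod_cast hab
  have hz3 : (-α - 2) * ((α - 1) * z) ∈ eisenstein α :=
    mul_mem_eisenstein hα ⟨-2, -1, by push_cast; ring⟩ hz
  have key : z = a * (k * z) + b * ((-α - 2) * ((α - 1) * z)) := by
    linear_combination (-z) * hab' + b * z * hα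
  rw [key]
  exact add_mem (mul_mem_eisenstein hα (intCast_mem_eisenstein a) hkz)
    (mul_mem_eisenstein hα (intCast_mem_eisenstein b) hz3)

end Multiples

lemma smul_mem_of_mem_eisenstein {α : ℂ} {M : Type*} [AddCommGroup M] [Module ℂ M]
    {G : AddSubgroup M} {v : M} (hv : v ∈ G) (hαv : α • v ∈ G) {z : ℂ}
    (hz : z ∈ eisenstein α) : z • v ∈ G := by
  obtain ⟨m, n, rfl⟩ := hz
  rw [add_smul, mul_smul, Int.cast_smul_eq_zsmul, Int.cast_smul_eq_zsmul]
  exact add_mem (zsmul_mem hv m) (zsmul_mem hαv n)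

end Eisenstein

section Coordinates

variable {R : Type*} [CommRing R] {n : ℕ}

lemma sum_eq_sum_sub_last_add (x : Fin (n + 1) → R) :
    ∑ i, x i = ∑ i : Fin n, (x i.castSucc - x (Fin.last n)) + (n + 1) * x (Fin.last n) := by
  rw [Fin.sum_univ_castSucc, sum_sub_distrib, sum_const, card_univ, Fintype.card_fin,
    nsmul_eq_mul]
  ring

lemma eq_sum_sub_last_smul_single_add_const (x : Fin (n + 1) → R) :
    x = ∑ i : Fin n, (x i.castSucc - x (Fin.last n)) • Pi.single i.castSucc 1
      + x (Fin.last n) • fun _ => 1 := by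
  ext j
  induction j using Fin.lastCases with
  | last => simp [Finset.sum_apply]
  | cast j => simp [Finset.sum_apply, Pi.single_apply]

lemma eq_sum_smul_sub_single_last_add (x : Fin (n + 1) → R) :
    x = ∑ i : Fin n, x i.castSucc • (Pi.single i.castSucc 1 - Pi.single (Fin.last n) 1)
      + (∑ i, x i) • Pi.single (Fin.last n) 1 := by
  ext j
  induction j using Fin.lastCases with
  | last => simp [Finset.sum_apply, Fin.sum_univ_castSucc]
  | cast j => simp [Finset.sum_apply, Pi.single_apply, (Fin.castSucc_lt_last j).ne]

end Coordinates

section Lattices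

variable (α : ℂ) (n : ℕ)

def lattice : AddSubgroup (Fin n → ℂ) where
  carrier := {x | ∀ i j : Fin n, i < j →
    ∀ β ∈ ({1, α, α ^ 2} : Set ℂ), x i - β * x j ∈ eisenstein α}
  zero_mem' := by simp
  add_mem' := by
    intro x y hx hy i j hij β hβ
    convert add_mem (hx i j hij β hβ) (hy i j hij β hβ) using 1
    simp only [Pi.add_apply]
    ring
  neg_mem' := by
    intro x hx i j hij β hβ
    convert neg_mem (hx i j hij β hβ) using 1
    simp only [Pi.neg_apply]
    ring

def rootLattice : AddSubgroup (Fin n → ℂ) :=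
  AddSubgroup.closure {x | ∃ i j : Fin n, i < j ∧ ∃ β ∈ ({1, α, α ^ 2} : Set ℂ),
    ∃ z ∈ ({1, α} : Set ℂ), x = z • (Pi.single i 1 - β • Pi.single j 1)}

/-- `ℤ[α]e₁ ⊕ ⋯ ⊕ ℤ[α]eₙ ⊕ (α - 1)⁻¹ℤ[α]w` in `ℂⁿ⁺¹`, where `w = e₁ + ⋯ + eₙ₊₁`. -/
def spanLattice : AddSubgroup (Fin (n + 1) → ℂ) :=
  AddSubgroup.closure
    ({x | ∃ i : Fin n, ∃ z ∈ ({1, α} : Set ℂ), x = z • Pi.single i.castSucc 1} ∪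
      {x | ∃ z ∈ ({1, α} : Set ℂ), x = (z / (α - 1)) • fun _ => 1})

def scaledSum : (Fin n → ℂ) →+ ℂ where
  toFun x := (α - 1) * ∑ i, x i
  map_zero' := by simp
  map_add' x y := by simp [sum_add_distrib, mul_add]

variable {α n}

lemma scaledSum_apply (x : Fin n → ℂ) : scaledSum α n x = (α - 1) * ∑ i, x i := rfl

lemma mem_lattice_of_forall_mem (hα : α ^ 2 + α + 1 = 0) {x : Fin n → ℂ}
    (hx : ∀ i, x i ∈ eisenstein α) : x ∈ lattice α n := fun i j _ _ hβ =>
  sub_mem (hx i) (mul_mem_eisenstein hα (mem_eisenstein_of_mem_cubeRoots hα hβ) (hx j))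

lemma smul_single_mem_lattice (hα : α ^ 2 + α + 1 = 0) {z : ℂ} (hz : z ∈ eisenstein α)
    (k : Fin n) : z • Pi.single k 1 ∈ lattice α n := by
  refine mem_lattice_of_forall_mem hα fun i => ?_
  rw [Pi.smul_apply, Pi.single_apply]
  split_ifs
  · simpa using hz
  · simp

lemma div_smul_const_mem_lattice (hα : α ^ 2 + α + 1 = 0) {z : ℂ} (hz : z ∈ eisenstein α) :
    ((z / (α - 1)) • fun _ => 1 : Fin n → ℂ) ∈ lattice α n := by
  intro i j _ β hβ
  obtain ⟨c, hc, hβc⟩ := mem_multiplesOf.mp (one_sub_mem_multiplesOf hα hβ)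
  have : z / (α - 1) - β * (z / (α - 1)) = z * c := by
    rw [← mul_div_cancel_left₀ (z * c) (sub_one_ne_zero hα), mul_left_comm, hβc]
    ring
  simpa only [Pi.smul_apply, smul_eq_mul, mul_one, this] using mul_mem_eisenstein hα hz hc

lemma sub_last_mem_of_mem_lattice {x : Fin (n + 1) → ℂ} (hx : x ∈ lattice α (n + 1))
    (i : Fin n) : x i.castSucc - x (Fin.last n) ∈ eisenstein α := by
  simpa using hx _ _ (Fin.castSucc_lt_last i) 1 (by simp)

lemma sub_one_mul_last_mem_of_mem_lattice {x : Fin (n + 2) → ℂ}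
    (hx : x ∈ lattice α (n + 2)) : (α - 1) * x (Fin.last (n + 1)) ∈ eisenstein α := by
  have h1 := hx _ _ (Fin.castSucc_lt_last 0) 1 (by simp)
  have h2 := hx _ _ (Fin.castSucc_lt_last 0) α (by simp)
  have := sub_mem h1 h2
  rwa [sub_sub_sub_cancel_left, ← sub_mul] at this

lemma smul_single_mem_spanLattice {z : ℂ} (hz : z ∈ eisenstein α) (i : Fin n) :
    z • Pi.single i.castSucc 1 ∈ spanLattice α n :=
  smul_mem_of_mem_eisenstein (G := spanLattice α n)
    (AddSubgroup.subset_closure (Or.inl ⟨i, 1, by simp, (one_smul ℂ _).symm⟩))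
    (AddSubgroup.subset_closure (Or.inl ⟨i, α, by simp, rfl⟩)) hz

lemma div_smul_const_mem_spanLattice {z : ℂ} (hz : z ∈ eisenstein α) :
    ((z / (α - 1)) • fun _ => 1) ∈ spanLattice α n := by
  have hαv : α • (1 / (α - 1)) • (fun _ => 1) ∈ spanLattice α n := by
    rw [smul_smul, mul_one_div]
    exact AddSubgroup.subset_closure (Or.inr ⟨α, by simp, rfl⟩)
  have h := smul_mem_of_mem_eisenstein (G := spanLattice α n)
    (AddSubgroup.subset_closure (Or.inr ⟨1, by simp, rfl⟩)) hαv hz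
  rwa [smul_smul, mul_one_div] at h

theorem spanLattice_eq_lattice (hα : α ^ 2 + α + 1 = 0) :
    spanLattice α (n + 1) = lattice α (n + 2) := by
  refine le_antisymm ((AddSubgroup.closure_le _).mpr ?_) fun x hx => ?_
  · rintro x (⟨k, z, hz, rfl⟩ | ⟨z, hz, rfl⟩)
    · exact smul_single_mem_lattice hα (mem_eisenstein_of_mem_pair hz) _
    · exact div_smul_const_mem_lattice hα (mem_eisenstein_of_mem_pair hz)
  · rw [eq_sum_sub_last_smul_single_add_const x]
    refine add_mem (sum_mem fun i _ => smul_single_mem_spanLattice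
      (sub_last_mem_of_mem_lattice hx i) i) ?_
    rw [← mul_div_cancel_left₀ (x (Fin.last _)) (sub_one_ne_zero hα)]
    exact div_smul_const_mem_spanLattice (sub_one_mul_last_mem_of_mem_lattice hx)

lemma smul_mem_rootLattice {i j : Fin n} (hij : i < j) {β : ℂ}
    (hβ : β ∈ ({1, α, α ^ 2} : Set ℂ)) {z : ℂ} (hz : z ∈ eisenstein α) :
    z • (Pi.single i 1 - β • Pi.single j 1) ∈ rootLattice α n :=
  smul_mem_of_mem_eisenstein (G := rootLattice α n)
    (AddSubgroup.subset_closure ⟨i, j, hij, β, hβ, 1, by simp, (one_smul ℂ _).symm⟩)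
    (AddSubgroup.subset_closure ⟨i, j, hij, β, hβ, α, by simp, rfl⟩) hz

lemma mem_rootLattice_of_forall_mem {x : Fin (n + 2) → ℂ} (hx : ∀ i, x i ∈ eisenstein α)
    (hsum : ∑ i, x i ∈ multiplesOf α (α - 1)) : x ∈ rootLattice α (n + 2) := by
  obtain ⟨u, hu, hsu⟩ := mem_multiplesOf.mp hsum
  have h0 : (0 : Fin (n + 2)) < Fin.last (n + 1) := Fin.castSucc_lt_last (0 : Fin (n + 1))
  have hlast : (∑ i, x i) • Pi.single (Fin.last (n + 1)) (1 : ℂ)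
      = u • (Pi.single 0 1 - (1 : ℂ) • Pi.single (Fin.last (n + 1)) 1)
        - u • (Pi.single 0 1 - α • Pi.single (Fin.last (n + 1)) 1) := by
    rw [← hsu]
    module
  rw [eq_sum_smul_sub_single_last_add x, hlast]
  refine add_mem (sum_mem fun i _ => ?_)
    (sub_mem (smul_mem_rootLattice h0 (by simp) hu) (smul_mem_rootLattice h0 (by simp) hu))
  simpa using smul_mem_rootLattice (Fin.castSucc_lt_last i) (β := 1) (by simp) (hx i.castSucc)

end Lattices

section Quotient

variable {α : ℂ} {n : ℕ} (hα : α ^ 2 + α + 1 = 0)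
include hα

lemma scaledSum_mem_of_mem_lattice {x : Fin (n + 2) → ℂ} (hx : x ∈ lattice α (n + 2)) :
    scaledSum α (n + 2) x ∈ eisenstein α := by
  have hdiff : (α - 1) * ∑ i : Fin (n + 1), (x i.castSucc - x (Fin.last _)) ∈ eisenstein α :=
    mul_mem_eisenstein hα ⟨-1, 1, by push_cast; ring⟩
      (sum_mem fun i _ => sub_last_mem_of_mem_lattice hx i)
  have hlast : ((n : ℤ) + 2 : ℤ) * ((α - 1) * x (Fin.last _)) ∈ eisenstein α :=
    mul_mem_eisenstein hα (intCast_mem_eisenstein _) (sub_one_mul_last_mem_of_mem_lattice hx)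
  convert add_mem hdiff hlast using 1
  rw [scaledSum_apply, sum_eq_sum_sub_last_add x]
  push_cast
  ring

lemma scaledSum_mem_of_mem_rootLattice {x : Fin n → ℂ} (hx : x ∈ rootLattice α n) :
    scaledSum α n x ∈ multiplesOf α 3 := by
  refine (AddSubgroup.closure_le ((multiplesOf α 3).comap (scaledSum α n))).mpr ?_ hx
  rintro _ ⟨i, j, -, β, hβ, z, hz, rfl⟩
  have hsum : scaledSum α n (z • (Pi.single i 1 - β • Pi.single j 1))
      = (α - 1) * ((1 - β) * z) := by
    rw [scaledSum_apply]
    congr 1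
    simp [sum_sub_distrib, ← mul_sum]
    ring
  rw [SetLike.mem_coe, AddSubgroup.mem_comap, hsum]
  exact sub_one_mul_mem_multiplesOf_three hα
    (mul_mem_multiplesOf hα (one_sub_mem_multiplesOf hα hβ) (mem_eisenstein_of_mem_pair hz))

theorem mem_rootLattice_iff (hn : IsCoprime ((n : ℤ) + 2) 3) {x : Fin (n + 2) → ℂ}
    (hx : x ∈ lattice α (n + 2)) :
    x ∈ rootLattice α (n + 2) ↔ scaledSum α (n + 2) x ∈ multiplesOf α 3 := by
  refine ⟨scaledSum_mem_of_mem_rootLattice hα, fun hs => ?_⟩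
  have hsum : ∑ i, x i ∈ multiplesOf α (α - 1) :=
    mem_multiplesOf_sub_one_of_sub_one_mul hα hs
  have hdiff : ∑ i : Fin (n + 1), (x i.castSucc - x (Fin.last _)) ∈ eisenstein α :=
    sum_mem fun i _ => sub_last_mem_of_mem_lattice hx i
  have hlast : x (Fin.last (n + 1)) ∈ eisenstein α := by
    refine mem_eisenstein_of_mul_mem hα hn ?_ (sub_one_mul_last_mem_of_mem_lattice hx)
    have := sub_mem (multiplesOf_le hα ⟨-1, 1, by push_cast; ring⟩ hsum) hdiff
    rw [sum_eq_sum_sub_last_add x, add_sub_cancel_left] at this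
    convert this using 2
    push_cast
    ring
  refine mem_rootLattice_of_forall_mem (fun i => ?_) hsum
  induction i using Fin.lastCases with
  | last => exact hlast
  | cast i => simpa using add_mem (sub_last_mem_of_mem_lattice hx i) hlast

def scaledSumMod3 : spanLattice α (n + 1) →+ ZMod 3 × ZMod 3 :=
  (reduceMod 3 (im_ne_zero hα)).comp
    (((scaledSum α (n + 2)).comp (spanLattice α (n + 1)).subtype).codRestrict _ fun x =>
      scaledSum_mem_of_mem_lattice hα (spanLattice_eq_lattice hα ▸ x.2))

lemma scaledSumMod3_apply {x : spanLattice α (n + 1)} {m k : ℤ}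
    (hx : scaledSum α (n + 2) x = m + k * α) :
    scaledSumMod3 hα x = ((m : ZMod 3), (k : ZMod 3)) :=
  reduceMod_apply _ hx

lemma ker_scaledSumMod3 (hn : IsCoprime ((n : ℤ) + 2) 3) :
    (scaledSumMod3 hα).ker =
      (rootLattice α (n + 2)).addSubgroupOf (spanLattice α (n + 1)) := by
  ext x
  rw [AddMonoidHom.mem_ker, AddSubgroup.mem_addSubgroupOf,
    mem_rootLattice_iff hα hn (spanLattice_eq_lattice hα ▸ x.2)]
  exact reduceMod_eq_zero_iff _

lemma scaledSumMod3_surjective (hn : IsCoprime ((n : ℤ) + 2) 3) :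
    Function.Surjective (scaledSumMod3 hα (n := n)) := by
  obtain ⟨a, b, hab⟩ := hn
  let g₁ : spanLattice α (n + 1) :=
    ⟨Pi.single (0 : Fin (n + 1)).castSucc 1, by
      simpa only [one_smul] using smul_single_mem_spanLattice one_mem_eisenstein 0⟩
  let g₂ : spanLattice α (n + 1) :=
    ⟨(1 / (α - 1)) • fun _ => 1, div_smul_const_mem_spanLattice one_mem_eisenstein⟩
  have h₁ : scaledSumMod3 hα g₁ = (((-1 : ℤ) : ZMod 3), ((1 : ℤ) : ZMod 3)) :=
    scaledSumMod3_apply hα (by simp [g₁, scaledSum_apply]; ring)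
  have h₂ : scaledSumMod3 hα g₂ = ((((n : ℤ) + 2 : ℤ) : ZMod 3), ((0 : ℤ) : ZMod 3)) :=
    scaledSumMod3_apply hα (by
      simp [g₂, scaledSum_apply]
      field_simp [sub_one_ne_zero hα])
  rintro ⟨p, q⟩
  obtain ⟨m, rfl⟩ := ZMod.intCast_surjective p
  obtain ⟨k, rfl⟩ := ZMod.intCast_surjective q
  refine ⟨k • g₁ + ((m + k) * a) • g₂, ?_⟩
  have hab' : (a : ZMod 3) * (n + 2) + b * 3 = 1 := by
    exact_mod_cast congrArg (Int.cast : ℤ → ZMod 3) hab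
  have h3 : (3 : ZMod 3) = 0 := rfl
  rw [map_add, map_zsmul, map_zsmul, h₁, h₂]
  ext
  · simp
    linear_combination (m + k) * hab' - (m + k) * b * h3
  · simp

theorem nonempty_quotient_addEquiv (hn : IsCoprime ((n : ℤ) + 2) 3) :
    Nonempty ((spanLattice α (n + 1) ⧸
      (rootLattice α (n + 2)).addSubgroupOf (spanLattice α (n + 1))) ≃+ ZMod 3 × ZMod 3) :=
  ⟨(QuotientAddGroup.quotientAddEquivOfEq (ker_scaledSumMod3 hα hn).symm).trans
    (QuotientAddGroup.quotientKerEquivOfSurjective _ (scaledSumMod3_surjective hα hn))⟩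

end Quotient

end EisensteinLattice

end

/-- With `α` a primitive third root of unity, the lattice
`Λ = {x ∈ ℂ⁵ : xᵢ − βxⱼ ∈ ℤ[α] for all i < j, β ∈ μ₃}` equals
`ℤ[α]e₁ ⊕ ⋯ ⊕ ℤ[α]e₄ ⊕ (1/(α−1))ℤ[α]w` where `w = e₁+⋯+e₅`, and the quotient of `Λ`
by the sublattice `Λ₀` generated by the vectors `eᵢ − βeⱼ` over `ℤ[α]` is isomorphic
to `(ℤ/3ℤ)²`. (The additive group `ℤ[α]` is generated by `1` and `α`.) -/
theorem stmt_3 (α : ℂ) (hα3 : α ^ 3 = 1) (hα1 : α ≠ 1) :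
    let Zα : Set ℂ := {z | ∃ m n : ℤ, z = m + n * α}
    let e : Fin 5 → (Fin 5 → ℂ) := fun i => Pi.single i 1
    let w : Fin 5 → ℂ := fun _ => 1
    let Λ₀ : AddSubgroup (Fin 5 → ℂ) := AddSubgroup.closure
      {x | ∃ i j : Fin 5, i < j ∧ ∃ β ∈ ({1, α, α ^ 2} : Set ℂ),
        ∃ z ∈ ({1, α} : Set ℂ), x = z • (e i - β • e j)}
    let Λ' : AddSubgroup (Fin 5 → ℂ) := AddSubgroup.closure
      ({x | ∃ i : Fin 4, ∃ z ∈ ({1, α} : Set ℂ), x = z • e i.castSucc} ∪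
        {x | ∃ z ∈ ({1, α} : Set ℂ), x = (z / (α - 1)) • w})
    {x : Fin 5 → ℂ | ∀ i j : Fin 5, i < j →
        ∀ β ∈ ({1, α, α ^ 2} : Set ℂ), x i - β * x j ∈ Zα}
      = (Λ' : Set (Fin 5 → ℂ))
    ∧ Nonempty ((Λ' ⧸ Λ₀.addSubgroupOf Λ') ≃+ (ZMod 3 × ZMod 3)) := by
  intro Zα e w Λ₀ Λ'
  have hα : α ^ 2 + α + 1 = 0 :=
    mul_left_cancel₀ (sub_ne_zero.mpr hα1) (by linear_combination hα3)
  exact ⟨congrArg SetLike.coe (EisensteinLattice.spanLattice_eq_lattice (n := 3) hα).symm,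
    EisensteinLattice.nonempty_quotient_addEquiv (n := 3) hα ⟨-1, 2, by norm_num⟩⟩
end

section
/- Let α be a primitive third root of unity, w = (1,1,1,1,1) ∈ ℂ⁵, and let ω be the real alternating form on ℂ⁵ (viewed as a real vector space) given by ω(u,v) = (2/√3)·Im(Σₖ uₖ·conj(vₖ)). Then ω(w/(α−1), αw/(α−1)) = −5/3; in particular, this value is not an integer. -/
/-!
With `c = (α - 1)⁻¹` the two vectors are `c • w` and `(α * c) • w`, so the Hermitian sum is
`5 * |c|² * conj α`. Its imaginary part is `-5 * Im α / |α - 1|² = -5 * (√3 / 2) / 3`, and the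
factor `2 / √3` turns this into `-5 / 3`.
-/

open Complex ComplexConjugate Real

lemma Complex.exp_two_pi_mul_I_div_three :
    exp (2 * π * I / 3) = -1 / 2 + (√3 / 2 : ℝ) * I := by
  have h : 2 * (π : ℂ) * I / 3 = ((π - π / 3 : ℝ) : ℂ) * I := by push_cast; ring
  rw [h, exp_mul_I, ← ofReal_cos, ← ofReal_sin, Real.cos_pi_sub, Real.sin_pi_sub,
    Real.cos_pi_div_three, Real.sin_pi_div_three]
  push_cast
  ring

lemma Complex.exp_two_pi_mul_I_div_three_im : (exp (2 * π * I / 3)).im = √3 / 2 := by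
  simp [exp_two_pi_mul_I_div_three]

lemma Complex.normSq_exp_two_pi_mul_I_div_three_sub_one :
    normSq (exp (2 * π * I / 3) - 1) = 3 := by
  have h : (-1 / 2 + (√3 / 2 : ℝ) * I - 1 : ℂ) = (-3 / 2 : ℝ) + (√3 / 2 : ℝ) * I := by
    push_cast; ring
  rw [exp_two_pi_mul_I_div_three, h, normSq_add_mul_I, div_pow, div_pow,
    Real.sq_sqrt (by norm_num)]
  norm_num

lemma Complex.im_mul_conj_mul_self (a c : ℂ) : (c * conj (a * c)).im = -(normSq c * a.im) := by
  rw [map_mul, mul_left_comm, mul_conj, im_mul_ofReal, conj_im]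
  ring

lemma sum_smul_one_mul_conj_smul_one {ι : Type*} [Fintype ι] (c d : ℂ) :
    ∑ k : ι, (c • fun _ => (1 : ℂ)) k * conj ((d • fun _ => (1 : ℂ)) k) =
      (Fintype.card ι : ℝ) • (c * conj d) := by
  simp [Complex.real_smul]

lemma not_exists_int_eq_neg_five_div_three : ¬ ∃ n : ℤ, (n : ℝ) = -5 / 3 := by
  rintro ⟨n, hn⟩
  have : 3 * n = -5 := by exact_mod_cast (by rw [hn]; norm_num : (3 * n : ℝ) = -5)
  omega

/-- With `α = e^{2πi/3}`, `w = (1,…,1) ∈ ℂ⁵` and the alternating form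
`ω(u,v) = (2/√3)·Im(Σₖ uₖ·conj(vₖ))`, one has `ω(w/(α−1), αw/(α−1)) = −5/3`,
which is not an integer. -/
theorem stmt_4 :
    let α : ℂ := Complex.exp (2 * Real.pi * Complex.I / 3)
    let ω : (Fin 5 → ℂ) → (Fin 5 → ℂ) → ℝ := fun u v =>
      (2 / Real.sqrt 3) * (∑ k, u k * (starRingEnd ℂ) (v k)).im
    let w : Fin 5 → ℂ := fun _ => 1
    ω ((α - 1)⁻¹ • w) ((α / (α - 1)) • w) = -5 / 3 ∧
      ¬ ∃ n : ℤ, (n : ℝ) = -5 / 3 := by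
  intro α ω w
  refine ⟨?_, not_exists_int_eq_neg_five_div_three⟩
  show 2 / √3 * (∑ k : Fin 5, ((α - 1)⁻¹ • w) k * conj (((α / (α - 1)) • w) k)).im = -5 / 3
  rw [sum_smul_one_mul_conj_smul_one, div_eq_mul_inv α, Fintype.card_fin, smul_im, smul_eq_mul,
    im_mul_conj_mul_self, normSq_inv, normSq_exp_two_pi_mul_I_div_three_sub_one,
    exp_two_pi_mul_I_div_three_im]
  field_simp
  norm_num
end

section
/- Let I be the set of pairs ({i,j}, β) with {i,j} a 2-element subset of {1,2,3,4,5} and β ∈ {0,1,2} (indexing third roots of unity), so |I| = 30. Define the symmetric 30×30 integer matrix M by: M[({i,j},β), ({s,t},γ)] = −3 if ({i,j},β) = ({s,t},γ); 1 if {i,j} ∩ {s,t} = ∅; and 0 otherwise. Then M has rank 25, and the kernel of M over ℚ has dimension 5. -/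
/-!
Write `A` for the adjacency matrix of the Petersen graph on the 2-subsets of `{1,…,5}` and `J` for
the all-ones `3 × 3` matrix, so that `M = A ⊗ J - 3`. A vector in the kernel of `M` is constant on
the fibres `β ↦ ({i,j}, β)`, so `ker M` is isomorphic to the eigenspace of `A` for the eigenvalue `1`.
The Petersen graph is strongly regular with parameters `(10, 3, 0, 1)`, hence
`(A - 1)(A - 3)(A + 2) = 0`, and `-(A - 3)(A + 2)/6` is a projection onto that eigenspace; its
trace `-(30 - 0 - 60)/6 = 5` is the dimension of the kernel, and the rank is `30 - 5`.
-/

open Finset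

/-- Index set for the 30 elliptic curves `E_{ij}^β`: a pair `i < j` in `Fin 5`
together with `β ∈ μ₃` encoded as `ZMod 3`. -/
abbrev Idx : Type := {p : Fin 5 × Fin 5 // p.1 < p.2} × ZMod 3

/-- The 30×30 intersection matrix of the curves `E_{ij}^β`: `−3` on the diagonal,
`1` between indices with disjoint pairs `{i,j} ∩ {s,t} = ∅`, and `0` otherwise. -/
def M : Matrix Idx Idx ℚ := fun x y =>
  if x = y then -3
  else if x.1.1.1 ≠ y.1.1.1 ∧ x.1.1.1 ≠ y.1.1.2 ∧ x.1.1.2 ≠ y.1.1.1 ∧ x.1.1.2 ≠ y.1.1.2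
  then 1 else 0

open Polynomial Module Module.End Matrix
open scoped Kronecker

def petersenGraph : SimpleGraph {p : Fin 5 × Fin 5 // p.1 < p.2} where
  Adj p q := p.1.1 ≠ q.1.1 ∧ p.1.1 ≠ q.1.2 ∧ p.1.2 ≠ q.1.1 ∧ p.1.2 ≠ q.1.2
  symm := ⟨fun _ _ h => ⟨h.1.symm, h.2.2.1.symm, h.2.1.symm, h.2.2.2.symm⟩⟩
  loopless := ⟨fun _ h => h.1 rfl⟩

instance : DecidableRel petersenGraph.Adj := fun p q => by unfold petersenGraph; infer_instance

theorem SimpleGraph.card_commonNeighbors_eq_card_filter {V : Type*} [Fintype V]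
    (G : SimpleGraph V) [DecidableRel G.Adj] (v w : V) :
    Fintype.card (G.commonNeighbors v w) = #{u | G.Adj v u ∧ G.Adj w u} := by
  rw [← Set.toFinset_card]
  congr 1
  ext u
  simp [mem_commonNeighbors]

theorem petersenGraph_isSRGWith : petersenGraph.IsSRGWith 10 3 0 1 where
  card := rfl
  regular v := by
    rw [← SimpleGraph.card_neighborFinset_eq_degree, SimpleGraph.neighborFinset_eq_filter]
    revert v
    decide
  of_adj := by
    simp only [SimpleGraph.card_commonNeighbors_eq_card_filter]
    decide
  of_not_adj := by
    unfold Pairwise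
    simp only [SimpleGraph.card_commonNeighbors_eq_card_filter]
    decide

/-- If `(X - μ) q` annihilates `f` and `q(μ) ≠ 0`, then `q(f) / q(μ)` is a projection onto the
`μ`-eigenspace of `f`. -/
theorem Module.End.finrank_eigenspace_eq_trace_div {K V : Type*} [Field K] [AddCommGroup V]
    [Module K V] [FiniteDimensional K V] {f : End K V} {μ : K} {q : K[X]}
    (hq : q.eval μ ≠ 0) (h : aeval f ((X - C μ) * q) = 0) :
    (finrank K (eigenspace f μ) : K) = LinearMap.trace K V (aeval f q) / q.eval μ := by
  have hproj : LinearMap.IsProj (eigenspace f μ) ((q.eval μ)⁻¹ • aeval f q) := by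
    constructor
    · intro x
      have hx := LinearMap.congr_fun h x
      simp only [map_mul, map_sub, aeval_X, aeval_C, Module.End.mul_apply, LinearMap.sub_apply,
        Module.algebraMap_end_apply, LinearMap.zero_apply, sub_eq_zero] at hx
      simp [hx, smul_comm μ]
    · intro x hx
      simp [aeval_apply_of_mem_apply_eq_smul (mem_eigenspace_iff.mp hx), smul_smul,
        inv_mul_cancel₀ hq]
  rw [← hproj.trace, map_smul, smul_eq_mul, inv_mul_eq_div]

theorem Matrix.finrank_eigenspace_toLin'_eq_trace_div {K n : Type*} [Field K] [Fintype n]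
    [DecidableEq n] {A : Matrix n n K} {μ : K} {q : K[X]}
    (hq : q.eval μ ≠ 0) (h : aeval A ((X - C μ) * q) = 0) :
    (finrank K (eigenspace (toLin' A) μ) : K) = (aeval A q).trace / q.eval μ := by
  have hA : ∀ p : K[X], aeval (toLin' A) p = toLin' (aeval A p) := fun p =>
    aeval_algHom_apply (Matrix.toLinAlgEquiv' : Matrix n n K ≃ₐ[K] _).toAlgHom A p
  rw [finrank_eigenspace_eq_trace_div hq (by rw [hA, h, map_zero]), hA, trace_toLin'_eq]

theorem SimpleGraph.IsSRGWith.finrank_eigenspace_adjMatrix_one {V K : Type*} [Fintype V]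
    [DecidableEq V] {G : SimpleGraph V} [DecidableRel G.Adj] [Field K] [CharZero K]
    (h : G.IsSRGWith 10 3 0 1) :
    finrank K (eigenspace (toLin' (G.adjMatrix K)) 1) = 5 := by
  classical
  set A := G.adjMatrix K with hA
  have hsq : A ^ 2 = 3 + Gᶜ.adjMatrix K := by
    rw [h.matrix_eq]
    simp
  have hJ : A ^ 2 + A - 2 = of 1 := by
    rw [hsq, ← G.one_add_adjMatrix_add_compl_adjMatrix_eq_of_one (α := K),
      compl_adjMatrix_eq_adjMatrix_compl, ← hA, show (3 : Matrix V V K) = 2 + 1 by norm_num]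
    abel
  have hreg : A * of 1 = 3 * of 1 := by
    ext v w
    rw [adjMatrix_mul_apply]
    simp [Matrix.mul_apply, Matrix.ofNat_apply, h.regular v]
  have hann : aeval A ((X - C (1 : K)) * ((X - C 3) * (X + C 2))) = 0 := by
    rw [show (X - C (1 : K)) * ((X - C 3) * (X + C 2)) = (X - C 3) * (X ^ 2 + X - 2) by
      simp only [map_one, map_ofNat]; ring]
    simp only [map_mul, map_sub, map_add, map_pow, aeval_X, map_ofNat, hJ, sub_mul, hreg,
      sub_self]
  have htr : (aeval A ((X - C (3 : K)) * (X + C 2))).trace = -30 := by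
    rw [show (X - C (3 : K)) * (X + C 2) = X ^ 2 - X - 6 by simp only [map_ofNat]; ring]
    simp only [map_sub, map_pow, aeval_X, map_ofNat, hsq]
    rw [trace_sub, trace_sub, hA, trace_adjMatrix]
    norm_num [Matrix.trace, Matrix.ofNat_apply, h.card]
  have h5 : (finrank K (eigenspace (toLin' A) 1) : K) = 5 := by
    rw [finrank_eigenspace_toLin'_eq_trace_div (by norm_num) hann, htr]
    norm_num
  exact_mod_cast h5

theorem Matrix.kronecker_of_one_mulVec {R P Z : Type*} [CommSemiring R] [Fintype P] [Fintype Z]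
    (K : Matrix P P R) (v : P × Z → R) (x : P × Z) :
    (K ⊗ₖ of 1 *ᵥ v) x = (K *ᵥ fun p => ∑ z, v (p, z)) x.1 := by
  simp [mulVec, dotProduct, Fintype.sum_prod_type, Finset.mul_sum]

theorem Matrix.finrank_eigenspace_kronecker_of_one {F P Z : Type*} [Field F] [Fintype P]
    [DecidableEq P] [Fintype Z] [DecidableEq Z] (K : Matrix P P F) {μ : F} (hμ : μ ≠ 0)
    (hZ : (Fintype.card Z : F) ≠ 0) :
    finrank F (eigenspace (toLin' (K ⊗ₖ (of 1 : Matrix Z Z F))) (Fintype.card Z * μ)) =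
      finrank F (eigenspace (toLin' K) μ) := by
  have : Nonempty Z := Fintype.card_pos_iff.mp (Nat.pos_of_ne_zero (by rintro h; simp [h] at hZ))
  set L := LinearMap.funLeft F F (Prod.fst : P × Z → P)
  have hL : Function.Injective L :=
    LinearMap.funLeft_injective_of_surjective _ _ _ Prod.fst_surjective
  suffices eigenspace (toLin' (K ⊗ₖ of 1)) (Fintype.card Z * μ) =
      (eigenspace (toLin' K) μ).map L by
    rw [this]
    exact (Submodule.equivMapOfInjective L hL _).finrank_eq.symm
  ext v
  simp only [mem_eigenspace_iff, toLin'_apply, Submodule.mem_map]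
  constructor
  · intro hv
    set s : P → F := fun p => ∑ z, v (p, z)
    have hvx : ∀ x : P × Z, v x = (K *ᵥ s) x.1 / (Fintype.card Z * μ) := fun x => by
      rw [← kronecker_of_one_mulVec, hv, Pi.smul_apply, smul_eq_mul,
        mul_div_cancel_left₀ _ (mul_ne_zero hZ hμ)]
    set w : P → F := fun p => (K *ᵥ s) p / (Fintype.card Z * μ)
    have hvw : v = L w := _root_.funext hvx
    have hs : s = (Fintype.card Z : F) • w := by
      ext p
      simp [s, hvw, L]
    refine ⟨w, ?_, hvw.symm⟩
    ext p
    have hwp : w p = (K *ᵥ s) p / (Fintype.card Z * μ) := rfl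
    rw [hs, mulVec_smul, Pi.smul_apply, smul_eq_mul] at hwp
    rw [Pi.smul_apply, smul_eq_mul, hwp]
    field_simp
  · rintro ⟨w, hw, rfl⟩
    have hsum : (fun p => ∑ z : Z, L w (p, z)) = (Fintype.card Z : F) • w := by
      ext p
      simp [L]
    ext x
    rw [kronecker_of_one_mulVec, hsum, mulVec_smul, hw]
    simp [L, mul_assoc]

theorem M_eq_kronecker : M = petersenGraph.adjMatrix ℚ ⊗ₖ of 1 - 3 := by
  ext ⟨p, β⟩ ⟨q, γ⟩
  rw [Matrix.sub_apply, kroneckerMap_apply, SimpleGraph.adjMatrix_apply, of_apply, Pi.one_apply,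
    Pi.one_apply, mul_one, Matrix.ofNat_apply]
  simp only [M, petersenGraph]
  split_ifs <;> grind

theorem ker_mulVecLin_M :
    LinearMap.ker M.mulVecLin = eigenspace (toLin' (petersenGraph.adjMatrix ℚ ⊗ₖ of 1)) 3 := by
  ext v
  simp [M_eq_kronecker, ofNat_mulVec, sub_eq_zero]

/-- The intersection matrix `M` has rank 25, and its kernel over ℚ has dimension 5. -/
theorem stmt_5 : Fintype.card Idx = 30 ∧ M.rank = 25 ∧
    Module.finrank ℚ (LinearMap.ker M.mulVecLin) = 5 := by
  have hker : finrank ℚ (LinearMap.ker M.mulVecLin) = 5 := by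
    rw [ker_mulVecLin_M, show (3 : ℚ) = Fintype.card (ZMod 3) * 1 by simp,
      finrank_eigenspace_kronecker_of_one _ one_ne_zero (by simp),
      petersenGraph_isSRGWith.finrank_eigenspace_adjMatrix_one]
  have hcard : Fintype.card Idx = 30 := rfl
  have hrank := LinearMap.finrank_range_add_finrank_ker M.mulVecLin
  rw [finrank_fintype_fun_eq_card, hcard, hker] at hrank
  exact ⟨hcard, by rw [Matrix.rank]; omega, hker⟩
end

section
/- With the 30×30 intersection matrix M as above (entries: −3 on the diagonal, 1 between indices ({i,j},β) and ({s,t},γ) with {i,j} ∩ {s,t} = ∅, and 0 otherwise), for each index ({i,j},β) let v_{ij}^β denote the corresponding standard basis vector of ℚ³⁰, and set B_{ij} = v_{ij}^0 + v_{ij}^1 + v_{ij}^2. Then for any indices 1 ≤ j < r < s < t ≤ 5, the vectors (B_{jr} + B_{st}) − (B_{js} + B_{rt}) and (B_{jr} + B_{st}) − (B_{jt} + B_{rs}) lie in the kernel of M, and such vectors span the 5-dimensional kernel of M over ℚ. -/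
open Finset

/-- Standard basis vector corresponding to the curve `E_{ij}^β`. -/
def v (x : Idx) : Idx → ℚ := Pi.single x 1

/-- `B_{ij} = v_{ij}^0 + v_{ij}^1 + v_{ij}^2`. -/
def B (i j : Fin 5) (h : i < j) : Idx → ℚ := ∑ β : ZMod 3, v ⟨⟨(i, j), h⟩, β⟩

/-! ### Pair-level integer certificates -/

/-- The 10 unordered pairs. -/
abbrev PP : Type := {p : Fin 5 × Fin 5 // p.1 < p.2}

/-- Petersen adjacency (disjoint pairs). -/
def az (p q : PP) : ℤ :=
  if p.1.1 ≠ q.1.1 ∧ p.1.1 ≠ q.1.2 ∧ p.1.2 ≠ q.1.1 ∧ p.1.2 ≠ q.1.2 then 1 else 0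

def bp (i j : Fin 5) (p : PP) : ℤ := if p.1 = (i, j) then 1 else 0

def bz (i j : Fin 5) : Idx → ℤ := fun y => bp i j y.1

/-- Integer version of `M`. -/
def Mz : Matrix Idx Idx ℤ := fun x y =>
  if x = y then -3
  else if x.1.1.1 ≠ y.1.1.1 ∧ x.1.1.1 ≠ y.1.1.2 ∧ x.1.1.2 ≠ y.1.1.1 ∧ x.1.1.2 ≠ y.1.1.2
  then 1 else 0

/-- Five explicit kernel vectors (pair-level integer version). -/
def wp : Fin 5 → PP → ℤ := ![
  fun p => bp 0 1 p + bp 2 3 p - (bp 0 2 p + bp 1 3 p),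
  fun p => bp 0 1 p + bp 2 3 p - (bp 0 3 p + bp 1 2 p),
  fun p => bp 0 1 p + bp 2 4 p - (bp 0 2 p + bp 1 4 p),
  fun p => bp 0 1 p + bp 2 4 p - (bp 0 4 p + bp 1 2 p),
  fun p => bp 0 1 p + bp 3 4 p - (bp 0 3 p + bp 1 4 p)]

def Ct : Matrix (Fin 5) (Fin 25) ℤ :=
  !![0,1,-1,1,-1, 0,0,1,-3,1, 0,0,0,1,-1, 0,0,0,0,1, 0,0,0,0,0;
     0,0,0,-2,2, 0,0,-2,2,0, 0,0,0,2,0, 0,0,0,0,-2, 0,0,0,0,0;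
     0,0,-2,0,2, 0,0,0,2,-2, 0,0,0,0,2, 0,0,0,0,-2, 0,0,0,0,0;
     0,1,1,1,-3, 0,0,-1,-1,1, 0,0,0,-1,1, 0,0,0,0,1, 0,0,0,0,0;
     0,1,1,-1,-1, 0,0,1,-1,-1, 0,0,0,-1,-1, 0,0,0,0,3, 0,0,0,0,0]

def cp (i : Fin 5) (p : PP) : ℤ :=
  Ct i ⟨p.1.1.val * 5 + p.1.2.val, by
    have := p.1.1.isLt; have := p.1.2.isLt; omega⟩

def qzp (p q : PP) : ℤ :=
  if p = q then 9
  else if p.1.1 ≠ q.1.1 ∧ p.1.1 ≠ q.1.2 ∧ p.1.2 ≠ q.1.1 ∧ p.1.2 ≠ q.1.2 then 0 else 3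

def pzp (p q : PP) : ℤ :=
  if p = q then 3
  else if p.1.1 ≠ q.1.1 ∧ p.1.1 ≠ q.1.2 ∧ p.1.2 ≠ q.1.1 ∧ p.1.2 ≠ q.1.2 then 1 else -1

/-- Integer version of the matrix `Q` with `W·C + Q·M = 1`. -/
def Qz : Matrix Idx Idx ℤ := fun x y =>
  if x = y then -45
  else if x.1.1 = y.1.1 then 9
  else if x.1.1.1 ≠ y.1.1.1 ∧ x.1.1.1 ≠ y.1.1.2 ∧ x.1.1.2 ≠ y.1.1.1 ∧ x.1.1.2 ≠ y.1.1.2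
  then 0 else 3

set_option maxRecDepth 1000000 in
lemma certA : ∀ p q : PP, ∑ i : Fin 5, wp i p * cp i q = pzp p q := by decide

set_option maxRecDepth 1000000 in
set_option maxHeartbeats 1000000 in
lemma certB : ∀ p q : PP,
    9 * pzp p q + (3 * (∑ r : PP, qzp p r * az r q) - 3 * qzp p q - 54 * az p q) = 0 := by
  decide

set_option maxRecDepth 1000000 in
lemma certC : ∀ i j : Fin 5, ∑ q : PP, cp i q * wp j q = if i = j then 6 else 0 := by decide

set_option maxRecDepth 1000000 in
set_option maxHeartbeats 1000000 in
lemma certD1 : ∀ j r s t : Fin 5, j < r → r < s → s < t → ∀ p : PP,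
    ∑ q : PP, az p q * (bp j r q + bp s t q - (bp j s q + bp r t q))
      = bp j r p + bp s t p - (bp j s p + bp r t p) := by decide

set_option maxRecDepth 1000000 in
set_option maxHeartbeats 1000000 in
lemma certD2 : ∀ j r s t : Fin 5, j < r → r < s → s < t → ∀ p : PP,
    ∑ q : PP, az p q * (bp j r q + bp s t q - (bp j t q + bp r s q))
      = bp j r p + bp s t p - (bp j t p + bp r s p) := by decide

/-! ### Bridging lemmas -/

lemma Mz_eq (x y : Idx) : Mz x y = az x.1 y.1 - 3 * (if x = y then 1 else 0) := by
  rcases eq_or_ne x y with rfl | h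
  · norm_num [Mz, az]
  · simp only [Mz, az, if_neg h, mul_ite, mul_one, mul_zero, sub_zero]

lemma Qz_eq (x y : Idx) : Qz x y = qzp x.1 y.1 - 54 * (if x = y then 1 else 0) := by
  rcases eq_or_ne x y with rfl | h
  · norm_num [Qz, qzp]
  · simp only [Qz, qzp, if_neg h, mul_ite, mul_one, mul_zero, sub_zero, Subtype.ext_iff]

lemma sum3 (h : PP → ℤ) : ∑ z : Idx, h z.1 = 3 * ∑ p : PP, h p := by
  rw [Fintype.sum_prod_type, Finset.mul_sum]
  refine Finset.sum_congr rfl fun p _ => ?_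
  simp [Finset.sum_const, mul_comm]

lemma sum_delta_left (y : Idx) (h : Idx → ℤ) :
    ∑ z : Idx, (if y = z then 1 else 0) * h z = h y := by
  simp [ite_mul, Finset.sum_ite_eq]

lemma sum_delta_right (y : Idx) (h : Idx → ℤ) :
    ∑ z : Idx, (if z = y then 1 else 0) * h z = h y := by
  simp [ite_mul, Finset.sum_ite_eq']

/-! ### Rational versions -/

def w : Fin 5 → Idx → ℚ := fun i y => ((wp i y.1 : ℤ) : ℚ)
def Wq : Matrix Idx (Fin 5) ℚ := fun x i => ((wp i x.1 : ℤ) : ℚ)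
def Cq : Matrix (Fin 5) Idx ℚ := fun i x => ((cp i x.1 : ℤ) : ℚ)
def Qq : Matrix Idx Idx ℚ := fun x y => ((Qz x y : ℤ) : ℚ)

lemma M_apply' (x y : Idx) : M x y = ((Mz x y : ℤ) : ℚ) := by
  simp only [M, Mz]
  split_ifs <;> norm_num

lemma B_apply (i j : Fin 5) (h : i < j) (y : Idx) :
    B i j h y = ((bz i j y : ℤ) : ℚ) := by
  obtain ⟨p, γ⟩ := y
  simp only [B, Finset.sum_apply, v, Pi.single_apply, bz, bp]
  by_cases hp : p = ⟨(i, j), h⟩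
  · subst hp
    simp [Prod.ext_iff]
  · have hp1 : p.1 ≠ (i, j) := fun hh => hp (Subtype.ext hh)
    simp [Prod.ext_iff, Subtype.ext_iff, hp1]

lemma intB (x y : Idx) :
    9 * (∑ i : Fin 5, wp i x.1 * cp i y.1) + (∑ z : Idx, Qz x z * Mz z y)
      = if x = y then 162 else 0 := by
  have e : ∀ z : Idx, Qz x z * Mz z y
      = qzp x.1 z.1 * az z.1 y.1
        - 3 * ((if z = y then 1 else 0) * qzp x.1 z.1)
        - 54 * ((if x = z then 1 else 0) * az z.1 y.1)
        + 162 * ((if x = z then 1 else 0) * (if z = y then 1 else 0)) := by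
    intro z
    rw [Qz_eq, Mz_eq]
    ring
  rw [Finset.sum_congr rfl fun z _ => e z, Finset.sum_add_distrib,
    Finset.sum_sub_distrib, Finset.sum_sub_distrib,
    ← Finset.mul_sum, ← Finset.mul_sum, ← Finset.mul_sum]
  have h1 : (∑ z : Idx, qzp x.1 z.1 * az z.1 y.1)
      = 3 * ∑ p : PP, qzp x.1 p * az p y.1 := sum3 (fun p => qzp x.1 p * az p y.1)
  rw [h1, sum_delta_right y (fun z => qzp x.1 z.1),
    sum_delta_left x (fun z => az z.1 y.1),
    sum_delta_left x (fun z => if z = y then 1 else 0),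
    certA x.1 y.1]
  have hB := certB x.1 y.1
  split_ifs <;> linarith

lemma key1Q : (9 : ℚ) • (Wq * Cq) + Qq * M = (162 : ℚ) • 1 := by
  ext x y
  have h := intB x y
  simp only [Matrix.add_apply, Matrix.smul_apply, Matrix.mul_apply, Matrix.one_apply,
    Wq, Cq, Qq, M_apply', smul_eq_mul, mul_ite, mul_one, mul_zero]
  exact_mod_cast h

lemma intC (i j : Fin 5) :
    ∑ x : Idx, cp i x.1 * wp j x.1 = if i = j then 18 else 0 := by
  have h1 : (∑ x : Idx, cp i x.1 * wp j x.1)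
      = 3 * ∑ q : PP, cp i q * wp j q := sum3 (fun q => cp i q * wp j q)
  rw [h1, certC i j]
  split_ifs <;> norm_num

lemma key2Q : Cq * Wq = (18 : ℚ) • 1 := by
  ext i j
  have h := intC i j
  simp only [Matrix.mul_apply, Matrix.smul_apply, Matrix.one_apply, Cq, Wq,
    smul_eq_mul, mul_ite, mul_one, mul_zero]
  exact_mod_cast h

lemma int3a (j r s t : Fin 5) (h1 : j < r) (h2 : r < s) (h3 : s < t) (y : Idx) :
    Mz.mulVec (fun z => bz j r z + bz s t z - (bz j s z + bz r t z)) y = 0 := by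
  have e : ∀ z : Idx, Mz y z * (bz j r z + bz s t z - (bz j s z + bz r t z))
      = az y.1 z.1 * (bp j r z.1 + bp s t z.1 - (bp j s z.1 + bp r t z.1))
        - 3 * ((if y = z then 1 else 0)
            * (bp j r z.1 + bp s t z.1 - (bp j s z.1 + bp r t z.1))) := by
    intro z
    rw [Mz_eq]
    simp only [bz]
    ring
  simp only [Matrix.mulVec, dotProduct]
  rw [Finset.sum_congr rfl fun z _ => e z, Finset.sum_sub_distrib, ← Finset.mul_sum]
  have hs : (∑ z : Idx, az y.1 z.1 * (bp j r z.1 + bp s t z.1 - (bp j s z.1 + bp r t z.1)))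
      = 3 * ∑ q : PP, az y.1 q * (bp j r q + bp s t q - (bp j s q + bp r t q)) :=
    sum3 (fun q => az y.1 q * (bp j r q + bp s t q - (bp j s q + bp r t q)))
  rw [hs, certD1 j r s t h1 h2 h3 y.1,
    sum_delta_left y (fun z => bp j r z.1 + bp s t z.1 - (bp j s z.1 + bp r t z.1))]
  ring

lemma int3b (j r s t : Fin 5) (h1 : j < r) (h2 : r < s) (h3 : s < t) (y : Idx) :
    Mz.mulVec (fun z => bz j r z + bz s t z - (bz j t z + bz r s z)) y = 0 := by
  have e : ∀ z : Idx, Mz y z * (bz j r z + bz s t z - (bz j t z + bz r s z))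
      = az y.1 z.1 * (bp j r z.1 + bp s t z.1 - (bp j t z.1 + bp r s z.1))
        - 3 * ((if y = z then 1 else 0)
            * (bp j r z.1 + bp s t z.1 - (bp j t z.1 + bp r s z.1))) := by
    intro z
    rw [Mz_eq]
    simp only [bz]
    ring
  simp only [Matrix.mulVec, dotProduct]
  rw [Finset.sum_congr rfl fun z _ => e z, Finset.sum_sub_distrib, ← Finset.mul_sum]
  have hs : (∑ z : Idx, az y.1 z.1 * (bp j r z.1 + bp s t z.1 - (bp j t z.1 + bp r s z.1)))
      = 3 * ∑ q : PP, az y.1 q * (bp j r q + bp s t q - (bp j t q + bp r s q)) :=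
    sum3 (fun q => az y.1 q * (bp j r q + bp s t q - (bp j t q + bp r s q)))
  rw [hs, certD2 j r s t h1 h2 h3 y.1,
    sum_delta_left y (fun z => bp j r z.1 + bp s t z.1 - (bp j t z.1 + bp r s z.1))]
  ring

lemma mulVec_cast (g : Idx → ℤ) :
    M.mulVec (fun z => ((g z : ℤ) : ℚ)) = fun y => ((Mz.mulVec g y : ℤ) : ℚ) := by
  funext y
  simp only [Matrix.mulVec, dotProduct, M_apply']
  push_cast
  rfl

lemma part1 (j r s t : Fin 5) (h1 : j < r) (h2 : r < s) (h3 : s < t) :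
    M.mulVec (B j r h1 + B s t h3 - (B j s (h1.trans h2) + B r t (h2.trans h3))) = 0 ∧
    M.mulVec (B j r h1 + B s t h3 - (B j t ((h1.trans h2).trans h3) + B r s h2)) = 0 := by
  constructor
  · have e : (B j r h1 + B s t h3 - (B j s (h1.trans h2) + B r t (h2.trans h3)))
        = fun z => (((bz j r z + bz s t z - (bz j s z + bz r t z) : ℤ)) : ℚ) := by
      funext z
      simp only [Pi.add_apply, Pi.sub_apply, B_apply]
      push_cast
      ring
    rw [e, mulVec_cast]
    funext y
    simp only [int3a j r s t h1 h2 h3 y, Int.cast_zero, Pi.zero_apply]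
  · have e : (B j r h1 + B s t h3 - (B j t ((h1.trans h2).trans h3) + B r s h2))
        = fun z => (((bz j r z + bz s t z - (bz j t z + bz r s z) : ℤ)) : ℚ) := by
      funext z
      simp only [Pi.add_apply, Pi.sub_apply, B_apply]
      push_cast
      ring
    rw [e, mulVec_cast]
    funext y
    simp only [int3b j r s t h1 h2 h3 y, Int.cast_zero, Pi.zero_apply]

lemma mulVec_eq_sum (c : Fin 5 → ℚ) : Wq.mulVec c = ∑ i, c i • w i := by
  funext y
  simp [Matrix.mulVec, dotProduct, Wq, w, Finset.sum_apply, mul_comm]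

lemma decomp (x : Idx → ℚ) (hx : M.mulVec x = 0) :
    x = Wq.mulVec ((1 / 18 : ℚ) • Cq.mulVec x) := by
  have h := congrArg (fun A : Matrix Idx Idx ℚ => A.mulVec x) key1Q
  simp only [Matrix.add_mulVec, Matrix.smul_mulVec, Matrix.one_mulVec] at h
  rw [← Matrix.mulVec_mulVec x Qq M, hx, Matrix.mulVec_zero, add_zero] at h
  have h2 : (Wq * Cq).mulVec x = (18 : ℚ) • x := by
    have h9 := congrArg (fun z : Idx → ℚ => (9 : ℚ)⁻¹ • z) h
    simp only [smul_smul] at h9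
    norm_num at h9
    exact h9
  rw [Matrix.mulVec_smul, Matrix.mulVec_mulVec, h2, smul_smul]
  norm_num

lemma hLI : LinearIndependent ℚ w := by
  rw [Fintype.linearIndependent_iff]
  intro g hg
  have hWg : Wq.mulVec g = 0 := by rw [mulVec_eq_sum]; exact hg
  have h := congrArg (fun z : Idx → ℚ => Cq.mulVec z) hWg
  simp only [Matrix.mulVec_mulVec, Matrix.mulVec_zero] at h
  rw [key2Q] at h
  simp only [Matrix.smul_mulVec, Matrix.one_mulVec] at h
  intro i
  have := congrFun h i
  simpa [smul_eq_mul, mul_eq_zero] using this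

/-- The set of vectors appearing in the statement. -/
def S : Set (Idx → ℚ) :=
  {x : Idx → ℚ | ∃ (j r s t : Fin 5) (h1 : j < r) (h2 : r < s) (h3 : s < t),
    x = B j r h1 + B s t h3 - (B j s (h1.trans h2) + B r t (h2.trans h3)) ∨
    x = B j r h1 + B s t h3 - (B j t ((h1.trans h2).trans h3) + B r s h2)}

lemma w_eq_0 : w 0 = B 0 1 (by decide) + B 2 3 (by decide)
    - (B 0 2 (by decide) + B 1 3 (by decide)) := by
  funext y
  have hw : wp 0 = fun p => bp 0 1 p + bp 2 3 p - (bp 0 2 p + bp 1 3 p) := rfl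
  simp only [w, hw, Pi.add_apply, Pi.sub_apply, B_apply, bz]
  push_cast
  ring

lemma w_eq_1 : w 1 = B 0 1 (by decide) + B 2 3 (by decide)
    - (B 0 3 (by decide) + B 1 2 (by decide)) := by
  funext y
  have hw : wp 1 = fun p => bp 0 1 p + bp 2 3 p - (bp 0 3 p + bp 1 2 p) := rfl
  simp only [w, hw, Pi.add_apply, Pi.sub_apply, B_apply, bz]
  push_cast
  ring

lemma w_eq_2 : w 2 = B 0 1 (by decide) + B 2 4 (by decide)
    - (B 0 2 (by decide) + B 1 4 (by decide)) := by
  funext y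
  have hw : wp 2 = fun p => bp 0 1 p + bp 2 4 p - (bp 0 2 p + bp 1 4 p) := rfl
  simp only [w, hw, Pi.add_apply, Pi.sub_apply, B_apply, bz]
  push_cast
  ring

lemma w_eq_3 : w 3 = B 0 1 (by decide) + B 2 4 (by decide)
    - (B 0 4 (by decide) + B 1 2 (by decide)) := by
  funext y
  have hw : wp 3 = fun p => bp 0 1 p + bp 2 4 p - (bp 0 4 p + bp 1 2 p) := rfl
  simp only [w, hw, Pi.add_apply, Pi.sub_apply, B_apply, bz]
  push_cast
  ring

lemma w_eq_4 : w 4 = B 0 1 (by decide) + B 3 4 (by decide)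
    - (B 0 3 (by decide) + B 1 4 (by decide)) := by
  funext y
  have hw : wp 4 = fun p => bp 0 1 p + bp 3 4 p - (bp 0 3 p + bp 1 4 p) := rfl
  simp only [w, hw, Pi.add_apply, Pi.sub_apply, B_apply, bz]
  push_cast
  ring

lemma w_mem : ∀ i, w i ∈ S := by
  intro i
  fin_cases i
  · exact ⟨0, 1, 2, 3, by decide, by decide, by decide, Or.inl w_eq_0⟩
  · exact ⟨0, 1, 2, 3, by decide, by decide, by decide, Or.inr w_eq_1⟩
  · exact ⟨0, 1, 2, 4, by decide, by decide, by decide, Or.inl w_eq_2⟩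
  · exact ⟨0, 1, 2, 4, by decide, by decide, by decide, Or.inr w_eq_3⟩
  · exact ⟨0, 1, 3, 4, by decide, by decide, by decide, Or.inl w_eq_4⟩

/-- For `j < r < s < t`, the vectors `(B_{jr}+B_{st}) − (B_{js}+B_{rt})` and
`(B_{jr}+B_{st}) − (B_{jt}+B_{rs})` lie in the kernel of `M`, and all such
vectors span the 5-dimensional kernel of `M` over ℚ. -/
theorem stmt_6 :
    (∀ (j r s t : Fin 5) (h1 : j < r) (h2 : r < s) (h3 : s < t),
      (B j r h1 + B s t h3 - (B j s (h1.trans h2) + B r t (h2.trans h3)))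
          ∈ LinearMap.ker M.mulVecLin ∧
      (B j r h1 + B s t h3 - (B j t ((h1.trans h2).trans h3) + B r s h2))
          ∈ LinearMap.ker M.mulVecLin) ∧
    Submodule.span ℚ
      {x : Idx → ℚ | ∃ (j r s t : Fin 5) (h1 : j < r) (h2 : r < s) (h3 : s < t),
        x = B j r h1 + B s t h3 - (B j s (h1.trans h2) + B r t (h2.trans h3)) ∨
        x = B j r h1 + B s t h3 - (B j t ((h1.trans h2).trans h3) + B r s h2)}
      = LinearMap.ker M.mulVecLin
    ∧ Module.finrank ℚ (LinearMap.ker M.mulVecLin) = 5 := by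
  have hspan : Submodule.span ℚ S = LinearMap.ker M.mulVecLin := by
    apply le_antisymm
    · rw [Submodule.span_le]
      rintro x ⟨j, r, s, t, h1, h2, h3, (rfl | rfl)⟩
      · simp only [SetLike.mem_coe, LinearMap.mem_ker, Matrix.mulVecLin_apply]
        exact (part1 j r s t h1 h2 h3).1
      · simp only [SetLike.mem_coe, LinearMap.mem_ker, Matrix.mulVecLin_apply]
        exact (part1 j r s t h1 h2 h3).2
    · intro x hx
      have hx0 : M.mulVec x = 0 := by
        simpa [Matrix.mulVecLin_apply] using LinearMap.mem_ker.mp hx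
      rw [decomp x hx0, mulVec_eq_sum]
      exact Submodule.sum_mem _ fun i _ =>
        Submodule.smul_mem _ _ (Submodule.subset_span (w_mem i))
  refine ⟨?_, hspan, ?_⟩
  · intro j r s t h1 h2 h3
    have h := part1 j r s t h1 h2 h3
    exact ⟨by simp only [LinearMap.mem_ker, Matrix.mulVecLin_apply]; exact h.1,
           by simp only [LinearMap.mem_ker, Matrix.mulVecLin_apply]; exact h.2⟩
  · apply le_antisymm
    · have hker_le : LinearMap.ker M.mulVecLin ≤ LinearMap.range Wq.mulVecLin := by
        intro x hx
        have hx0 : M.mulVec x = 0 := by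
          simpa [Matrix.mulVecLin_apply] using LinearMap.mem_ker.mp hx
        exact ⟨(1 / 18 : ℚ) • Cq.mulVec x, by
          rw [Matrix.mulVecLin_apply]; exact (decomp x hx0).symm⟩
      refine le_trans (Submodule.finrank_mono hker_le) ?_
      refine le_trans (LinearMap.finrank_range_le _) ?_
      simp [Module.finrank_pi]
    · have hsub : Set.range w ⊆ S := by
        rintro _ ⟨i, rfl⟩
        exact w_mem i
      have hle : Submodule.span ℚ (Set.range w) ≤ LinearMap.ker M.mulVecLin :=
        le_trans (Submodule.span_mono hsub) (le_of_eq hspan)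
      have := Submodule.finrank_mono hle
      rwa [finrank_span_eq_card hLI, Fintype.card_fin] at this
end
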